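/- arXiv:2310.03647 — 10 statements merged into one kernel-verified Lean document; each statement's English description precedes it below -/
import Mathlib

section
/- Given a human policy π_H and an algorithmic policy π_A, if π_A satisfies (1) α(π_A) ≤ α(π_H), (2) π_H(x,0) ≤ π_A(x,0) for all x, and (3) π_A(x,1) ≤ π_H(x,1) for all x, then for every compliance function c : X × A → {0,1}, the combined policy π_C (equal to π_A where c = 1 and π_H where c = 0) satisfies α(π_C) ≤ α(π_H). -/
open Classical Finset

noncomputable section

def groupAvg {X : Type*} [Fintype X] (P : X → Bool → ℝ) (π : X → Bool → ℝ) (a : Bool) : ℝ :=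
  ∑ x, π x a * P x a

def unfairness {X : Type*} [Fintype X] (P : X → Bool → ℝ) (π : X → Bool → ℝ) : ℝ :=
  |groupAvg P π true - groupAvg P π false|

def combine {X : Type*} (πA πH : X → Bool → ℝ) (c : X → Bool → Bool) : X → Bool → ℝ :=
  fun x a => if c x a then πA x a else πH x a

theorem stmt0
    {X : Type*} [Fintype X] [Nonempty X] (P : X → Bool → ℝ)
    (hP : ∀ x a, 0 < P x a) (hPsum : ∀ a, ∑ x, P x a = 1)
    (πH πA : X → Bool → ℝ)
    (hπH : ∀ x a, 0 ≤ πH x a ∧ πH x a ≤ 1) (hπA : ∀ x a, 0 ≤ πA x a ∧ πA x a ≤ 1)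
    (hord : groupAvg P πH false ≤ groupAvg P πH true)
    (h1 : unfairness P πA ≤ unfairness P πH)
    (h2 : ∀ x, πH x false ≤ πA x false)
    (h3 : ∀ x, πA x true ≤ πH x true) :
    ∀ c : X → Bool → Bool, unfairness P (combine πA πH c) ≤ unfairness P πH := by
  intro c
  have key : ∀ (π1 π2 : X → Bool → ℝ) (a : Bool), (∀ x, π1 x a ≤ π2 x a) →
      groupAvg P π1 a ≤ groupAvg P π2 a := by
    intro π1 π2 a h
    apply Finset.sum_le_sum
    intro x _
    exact mul_le_mul_of_nonneg_right (h x) (hP x a).le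
  have hCt1 : groupAvg P πA true ≤ groupAvg P (combine πA πH c) true :=
    key _ _ _ (fun x => by simp only [combine]; split <;> [exact le_refl _; exact h3 x])
  have hCt2 : groupAvg P (combine πA πH c) true ≤ groupAvg P πH true :=
    key _ _ _ (fun x => by simp only [combine]; split <;> [exact h3 x; exact le_refl _])
  have hCf1 : groupAvg P πH false ≤ groupAvg P (combine πA πH c) false :=
    key _ _ _ (fun x => by simp only [combine]; split <;> [exact h2 x; exact le_refl _])
  have hCf2 : groupAvg P (combine πA πH c) false ≤ groupAvg P πA false :=
    key _ _ _ (fun x => by simp only [combine]; split <;> [exact le_refl _; exact h2 x])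
  unfold unfairness at *
  rw [abs_le]
  constructor
  · have : -(|groupAvg P πA true - groupAvg P πA false|) ≤
        groupAvg P πA true - groupAvg P πA false := neg_abs_le _
    have h4 : groupAvg P πA true - groupAvg P πA false ≤
        groupAvg P (combine πA πH c) true - groupAvg P (combine πA πH c) false := by
      linarith
    have h5 := abs_of_nonneg (by linarith : 0 ≤ groupAvg P πH true - groupAvg P πH false)
    rw [h5]
    linarith [neg_abs_le (groupAvg P πA true - groupAvg P πA false), h5 ▸ h1]
  · have h5 := abs_of_nonneg (by linarith : 0 ≤ groupAvg P πH true - groupAvg P πH false)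
    rw [h5]
    linarith

end
end

section
/- Given a human policy π_H and an algorithmic policy π_A such that for every compliance function c the combined policy π_C satisfies α(π_C) ≤ α(π_H) (i.e., π_A is compliance-robustly fair), then necessarily: (1) α(π_A) ≤ α(π_H), (2) π_H(x,0) ≤ π_A(x,0) for all x, and (3) π_A(x,1) ≤ π_H(x,1) for all x. -/
open Classical Finset

noncomputable section

theorem stmt1
    {X : Type*} [Fintype X] [Nonempty X] (P : X → Bool → ℝ)
    (hP : ∀ x a, 0 < P x a) (hPsum : ∀ a, ∑ x, P x a = 1)
    (πH πA : X → Bool → ℝ)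
    (hπH : ∀ x a, 0 ≤ πH x a ∧ πH x a ≤ 1) (hπA : ∀ x a, 0 ≤ πA x a ∧ πA x a ≤ 1)
    (hord : groupAvg P πH false ≤ groupAvg P πH true)
    (hrobust : ∀ c : X → Bool → Bool, unfairness P (combine πA πH c) ≤ unfairness P πH) :
    unfairness P πA ≤ unfairness P πH ∧
    (∀ x, πH x false ≤ πA x false) ∧
    (∀ x, πA x true ≤ πH x true) := by
  set T := groupAvg P πH true with hT
  set F := groupAvg P πH false with hF
  have hUH : unfairness P πH = T - F := by
    rw [unfairness, abs_of_nonneg (by linarith)]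
  refine ⟨?_, ?_, ?_⟩
  · have h := hrobust (fun _ _ => true)
    have : combine πA πH (fun _ _ => true) = πA := by
      funext x a; simp [combine]
    rwa [this] at h
  · intro x0
    by_contra hlt
    push_neg at hlt
    set c : X → Bool → Bool := fun x a => decide (x = x0 ∧ a = false) with hc
    have h := hrobust c
    have hTrue : groupAvg P (combine πA πH c) true = T := by
      rw [hT]; unfold groupAvg
      apply Finset.sum_congr rfl
      intro x _
      simp [combine, hc]
    have d : ℝ := 0
    have hFalse : groupAvg P (combine πA πH c) false
        = F - (πH x0 false - πA x0 false) * P x0 false := by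
      have key : ∑ x, πH x false * P x false - ∑ x, combine πA πH c x false * P x false
          = (πH x0 false - πA x0 false) * P x0 false := by
        rw [← Finset.sum_sub_distrib]
        rw [Finset.sum_eq_single x0]
        · simp [combine, hc]; ring
        · intro b _ hb
          simp [combine, hc, hb]
        · intro hx; exact absurd (Finset.mem_univ x0) hx
      unfold groupAvg at key ⊢
      rw [hF]; unfold groupAvg; linarith
    have hd : 0 < (πH x0 false - πA x0 false) * P x0 false :=
      mul_pos (by linarith) (hP x0 false)
    rw [unfairness, hTrue, hFalse, hUH] at h
    have : T - (F - (πH x0 false - πA x0 false) * P x0 false)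
        ≤ |T - (F - (πH x0 false - πA x0 false) * P x0 false)| := le_abs_self _
    linarith
  · intro x0
    by_contra hlt
    push_neg at hlt
    set c : X → Bool → Bool := fun x a => decide (x = x0 ∧ a = true) with hc
    have h := hrobust c
    have hFalse : groupAvg P (combine πA πH c) false = F := by
      rw [hF]; unfold groupAvg
      apply Finset.sum_congr rfl
      intro x _
      simp [combine, hc]
    have hTrue : groupAvg P (combine πA πH c) true
        = T + (πA x0 true - πH x0 true) * P x0 true := by
      have key : ∑ x, combine πA πH c x true * P x true - ∑ x, πH x true * P x true
          = (πA x0 true - πH x0 true) * P x0 true := by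
        rw [← Finset.sum_sub_distrib]
        rw [Finset.sum_eq_single x0]
        · simp [combine, hc]; ring
        · intro b _ hb
          simp [combine, hc, hb]
        · intro hx; exact absurd (Finset.mem_univ x0) hx
      unfold groupAvg at key ⊢
      rw [hT]; unfold groupAvg; linarith
    have hd : 0 < (πA x0 true - πH x0 true) * P x0 true :=
      mul_pos (by linarith) (hP x0 true)
    rw [unfairness, hTrue, hFalse, hUH] at h
    have : T + (πA x0 true - πH x0 true) * P x0 true - F
        ≤ |T + (πA x0 true - πH x0 true) * P x0 true - F| := le_abs_self _
    linarith

end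
end

section
/- If the human policy π_H is perfectly fair, i.e., α(π_H) = 0, then an algorithmic policy π_A is compliance-robustly fair with respect to π_H if and only if π_A(x,a) = π_H(x,a) for all x ∈ X and a ∈ A. -/
/-! Following π_A at a single cell (x₀, a₀) moves only the average of group a₀, and by
(π_A − π_H)(x₀, a₀) · P(x₀ | a₀). Starting from a perfectly fair π_H this creates unfairness
|π_A − π_H|(x₀, a₀) · P(x₀ | a₀), which is positive unless π_A and π_H agree at that cell. -/

open Classical Finset

noncomputable section

theorem combine_self {X : Type*} (π : X → Bool → ℝ) (c : X → Bool → Bool) :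
    combine π π c = π := by
  funext x a
  simp only [combine, ite_self]

section

variable {X : Type*} [Fintype X] (P : X → Bool → ℝ) (πA πH : X → Bool → ℝ)

def singleCell (x₀ : X) (a₀ : Bool) : X → Bool → Bool :=
  fun x a => decide (x = x₀ ∧ a = a₀)

theorem groupAvg_combine_singleCell (x₀ : X) (a₀ a : Bool) :
    groupAvg P (combine πA πH (singleCell x₀ a₀)) a =
      groupAvg P πH a + if a = a₀ then (πA x₀ a₀ - πH x₀ a₀) * P x₀ a₀ else 0 := by
  have hterm : ∀ x, combine πA πH (singleCell x₀ a₀) x a * P x a =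
      πH x a * P x a + if x = x₀ then (if a = a₀ then (πA x₀ a₀ - πH x₀ a₀) * P x₀ a₀ else 0)
        else 0 := by
    intro x
    by_cases hx : x = x₀ <;> by_cases ha : a = a₀
    · subst hx ha
      simp only [combine, singleCell, and_self, decide_true, if_true]
      ring
    all_goals simp [combine, singleCell, hx, ha]
  simp only [groupAvg, hterm, sum_add_distrib, sum_ite_eq', mem_univ, if_true]

theorem unfairness_combine_singleCell (hfair : unfairness P πH = 0) (x₀ : X) (a₀ : Bool) :
    unfairness P (combine πA πH (singleCell x₀ a₀)) = |(πA x₀ a₀ - πH x₀ a₀) * P x₀ a₀| := by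
  have hbalanced : groupAvg P πH true = groupAvg P πH false := by
    rwa [unfairness, abs_eq_zero, sub_eq_zero] at hfair
  rw [unfairness, groupAvg_combine_singleCell, groupAvg_combine_singleCell, hbalanced]
  cases a₀ <;> simp [abs_neg]

end

theorem stmt2_general
    {X : Type*} [Fintype X] (P : X → Bool → ℝ)
    (hP : ∀ x a, 0 < P x a)
    (πH πA : X → Bool → ℝ)
    (hfair : unfairness P πH = 0) :
    (∀ c : X → Bool → Bool, unfairness P (combine πA πH c) ≤ unfairness P πH) ↔
      (∀ x a, πA x a = πH x a) := by
  constructor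
  · intro hrobust x a
    have hshift : |(πA x a - πH x a) * P x a| ≤ 0 := by
      simpa only [unfairness_combine_singleCell P πA πH hfair, hfair] using
        hrobust (singleCell x a)
    have hprod : (πA x a - πH x a) * P x a = 0 := abs_nonpos_iff.mp hshift
    exact sub_eq_zero.mp ((mul_eq_zero.mp hprod).resolve_right (hP x a).ne')
  · intro hagree c
    rw [show πA = πH from funext₂ hagree, combine_self]

theorem stmt2
    {X : Type*} [Fintype X] [Nonempty X] (P : X → Bool → ℝ)
    (hP : ∀ x a, 0 < P x a) (hPsum : ∀ a, ∑ x, P x a = 1)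
    (πH πA : X → Bool → ℝ)
    (hπH : ∀ x a, 0 ≤ πH x a ∧ πH x a ≤ 1) (hπA : ∀ x a, 0 ≤ πA x a ∧ πA x a ≤ 1)
    (hord : groupAvg P πH false ≤ groupAvg P πH true)
    (hfair : unfairness P πH = 0) :
    (∀ c : X → Bool → Bool, unfairness P (combine πA πH c) ≤ unfairness P πH) ↔
      (∀ x a, πA x a = πH x a) :=
  stmt2_general P hP πH πA hfair

end
end

section
/- If an algorithmic policy π_A is compliance-robustly fair with respect to π_H (deterministic compliance), then for every stochastic/partial compliance weight p : X × A → [0,1], the mixed policy π_C(x,a) = p(x,a)·π_A(x,a) + (1 − p(x,a))·π_H(x,a) satisfies α(π_C) ≤ α(π_H). -/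
open Classical Finset

noncomputable section

/-!
The signed gap `π̄(1) - π̄(0)` of the mixed policy with weights `q` is an affine function of `q`:
it equals the gap of `π_H` plus `∑ q(x,a) g(x,a)` for explicit gains `g`. On the cube `[0,1]^(X × A)`
such a function is maximised by the 0/1 weights `q = [g ≥ 0]` and minimised by `q = [g ≤ 0]`, and
0/1 weights are exactly deterministic compliance functions. Both extremes are bounded in absolute
value by `α(π_H)` by assumption, hence so is the gap at `q`.
-/

lemma mul_le_ite_nonneg_mul {q f : ℝ} (hq₀ : 0 ≤ q) (hq₁ : q ≤ 1) :
    q * f ≤ (if 0 ≤ f then 1 else 0) * f := by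
  split_ifs with hf <;> nlinarith

lemma ite_nonpos_mul_le_mul {q f : ℝ} (hq₀ : 0 ≤ q) (hq₁ : q ≤ 1) :
    (if f ≤ 0 then 1 else 0) * f ≤ q * f := by
  split_ifs with hf <;> nlinarith

def mixPolicy {X : Type*} (πA πH q : X → Bool → ℝ) : X → Bool → ℝ :=
  fun x a => q x a * πA x a + (1 - q x a) * πH x a

lemma combine_eq_mixPolicy {X : Type*} (πA πH : X → Bool → ℝ) (c : X → Bool → Bool) :
    combine πA πH c = mixPolicy πA πH (fun x a => if c x a then 1 else 0) := by
  funext x a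
  by_cases h : c x a <;> simp [combine, mixPolicy, h]

section Gap

variable {X : Type*} [Fintype X] (P πA πH : X → Bool → ℝ)

def groupGap (π : X → Bool → ℝ) : ℝ :=
  groupAvg P π true - groupAvg P π false

def complianceGain (x : X) (a : Bool) : ℝ :=
  (if a then 1 else -1) * ((πA x a - πH x a) * P x a)

lemma groupGap_mixPolicy (q : X → Bool → ℝ) :
    groupGap P (mixPolicy πA πH q) =
      groupGap P πH + ∑ x, ∑ a, q x a * complianceGain P πA πH x a := by
  simp only [groupGap, groupAvg, mixPolicy, complianceGain, Fintype.sum_bool, if_true,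
    Bool.false_eq_true, if_false, ← sum_sub_distrib, ← sum_add_distrib]
  exact sum_congr rfl fun x _ => by ring

lemma exists_groupGap_combine_ge {q : X → Bool → ℝ} (hq : ∀ x a, 0 ≤ q x a ∧ q x a ≤ 1) :
    ∃ c, groupGap P (mixPolicy πA πH q) ≤ groupGap P (combine πA πH c) := by
  refine ⟨fun x a => decide (0 ≤ complianceGain P πA πH x a), ?_⟩
  simp only [combine_eq_mixPolicy, groupGap_mixPolicy, decide_eq_true_eq]
  exact add_le_add_right (sum_le_sum fun x _ => sum_le_sum fun a _ =>
    mul_le_ite_nonneg_mul (hq x a).1 (hq x a).2) _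

lemma exists_groupGap_combine_le {q : X → Bool → ℝ} (hq : ∀ x a, 0 ≤ q x a ∧ q x a ≤ 1) :
    ∃ c, groupGap P (combine πA πH c) ≤ groupGap P (mixPolicy πA πH q) := by
  refine ⟨fun x a => decide (complianceGain P πA πH x a ≤ 0), ?_⟩
  simp only [combine_eq_mixPolicy, groupGap_mixPolicy, decide_eq_true_eq]
  exact add_le_add_right (sum_le_sum fun x _ => sum_le_sum fun a _ =>
    ite_nonpos_mul_le_mul (hq x a).1 (hq x a).2) _

end Gap

theorem stmt3_general
    {X : Type*} [Fintype X] (P : X → Bool → ℝ)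
    (πH πA : X → Bool → ℝ)
    (hrobust : ∀ c : X → Bool → Bool, unfairness P (combine πA πH c) ≤ unfairness P πH) :
    ∀ p : X → Bool → ℝ, (∀ x a, 0 ≤ p x a ∧ p x a ≤ 1) →
      unfairness P (fun x a => p x a * πA x a + (1 - p x a) * πH x a) ≤ unfairness P πH := by
  intro p hp
  obtain ⟨cU, hU⟩ := exists_groupGap_combine_ge P πA πH hp
  obtain ⟨cL, hL⟩ := exists_groupGap_combine_le P πA πH hp
  have hcU : groupGap P (combine πA πH cU) ≤ unfairness P πH :=
    (le_abs_self _).trans (hrobust cU)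
  have hcL : -unfairness P πH ≤ groupGap P (combine πA πH cL) :=
    (neg_abs_le _).trans' (neg_le_neg (hrobust cL))
  exact abs_le.2 ⟨hcL.trans hL, hU.trans hcU⟩

theorem stmt3
    {X : Type*} [Fintype X] [Nonempty X] (P : X → Bool → ℝ)
    (hP : ∀ x a, 0 < P x a) (hPsum : ∀ a, ∑ x, P x a = 1)
    (πH πA : X → Bool → ℝ)
    (hπH : ∀ x a, 0 ≤ πH x a ∧ πH x a ≤ 1) (hπA : ∀ x a, 0 ≤ πA x a ∧ πA x a ≤ 1)
    (hord : groupAvg P πH false ≤ groupAvg P πH true)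
    (hrobust : ∀ c : X → Bool → Bool, unfairness P (combine πA πH c) ≤ unfairness P πH) :
    ∀ p : X → Bool → ℝ, (∀ x a, 0 ≤ p x a ∧ p x a ≤ 1) →
      unfairness P (fun x a => p x a * πA x a + (1 - p x a) * πH x a) ≤ unfairness P πH :=
  stmt3_general P πH πA hrobust

end
end

section
/- Suppose π_A satisfies the compliance-robust fairness conditions with respect to an estimate π̂_H of the true human policy π_H (i.e., α(π_A) ≤ α(π̂_H), π̂_H(x,0) ≤ π_A(x,0), π_A(x,1) ≤ π̂_H(x,1) for all x), and suppose |π̂_H(x,a) − π_H(x,a)| ≤ ε for all x, a. Then for every compliance function c, the combined policy π_C of π_A with the true π_H satisfies α(π_C) ≤ α(π_H) + 4ε. -/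
open Classical Finset

noncomputable section

lemma avg_le_eps {X : Type*} [Fintype X] (P : X → Bool → ℝ)
    (hP : ∀ x a, 0 < P x a) (hPsum : ∀ a, ∑ x, P x a = 1)
    (f g : X → Bool → ℝ) (ε : ℝ) (a : Bool) (h : ∀ x, f x a ≤ g x a + ε) :
    groupAvg P f a ≤ groupAvg P g a + ε := by
  unfold groupAvg
  have h1 : ∑ x, f x a * P x a ≤ ∑ x, (g x a + ε) * P x a :=
    Finset.sum_le_sum fun x _ => mul_le_mul_of_nonneg_right (h x) (hP x a).le
  have h2 : ∑ x, (g x a + ε) * P x a = (∑ x, g x a * P x a) + ε := by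
    simp only [add_mul, Finset.sum_add_distrib, ← Finset.mul_sum, hPsum a, mul_one]
  linarith

theorem stmt4
    {X : Type*} [Fintype X] [Nonempty X] (P : X → Bool → ℝ)
    (hP : ∀ x a, 0 < P x a) (hPsum : ∀ a, ∑ x, P x a = 1)
    (πH πHhat πA : X → Bool → ℝ) (ε : ℝ) (hε : 0 ≤ ε)
    (hπH : ∀ x a, 0 ≤ πH x a ∧ πH x a ≤ 1) (hπHhat : ∀ x a, 0 ≤ πHhat x a ∧ πHhat x a ≤ 1)
    (hπA : ∀ x a, 0 ≤ πA x a ∧ πA x a ≤ 1)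
    (hordhat : groupAvg P πHhat false ≤ groupAvg P πHhat true)
    (h1 : unfairness P πA ≤ unfairness P πHhat)
    (h2 : ∀ x, πHhat x false ≤ πA x false)
    (h3 : ∀ x, πA x true ≤ πHhat x true)
    (hest : ∀ x a, |πHhat x a - πH x a| ≤ ε) :
    ∀ c : X → Bool → Bool,
      unfairness P (combine πA πH c) ≤ unfairness P πH + 4 * ε := by
  intro c
  have hest1 : ∀ x a, πHhat x a ≤ πH x a + ε := fun x a => by
    have := abs_le.mp (hest x a); linarith [this.2]
  have hest2 : ∀ x a, πH x a ≤ πHhat x a + ε := fun x a => by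
    have := abs_le.mp (hest x a); linarith [this.1]
  set cb := combine πA πH c with hcb
  -- pointwise bounds
  have b1 : groupAvg P cb true ≤ groupAvg P πH true + ε := by
    apply avg_le_eps P hP hPsum
    intro x
    simp only [hcb, combine]
    by_cases h : c x true
    · simp [h]; exact le_trans (h3 x) (hest1 x true)
    · simp [h]; linarith
  have b2 : groupAvg P πH false ≤ groupAvg P cb false + ε := by
    apply avg_le_eps P hP hPsum
    intro x
    simp only [hcb, combine]
    by_cases h : c x false
    · simp [h]; exact le_trans (hest2 x false) (by linarith [h2 x])
    · simp [h]; linarith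
  have b3 : groupAvg P cb false ≤ groupAvg P πA false + ε := by
    apply avg_le_eps P hP hPsum
    intro x
    simp only [hcb, combine]
    by_cases h : c x false
    · simp [h]; linarith
    · simp [h]; exact le_trans (hest2 x false) (by linarith [h2 x])
  have b4 : groupAvg P πA true ≤ groupAvg P cb true + ε := by
    apply avg_le_eps P hP hPsum
    intro x
    simp only [hcb, combine]
    by_cases h : c x true
    · simp [h]; linarith
    · simp [h]; exact le_trans (h3 x) (hest1 x true)
  have b5 : groupAvg P πHhat true ≤ groupAvg P πH true + ε :=
    avg_le_eps P hP hPsum _ _ _ _ fun x => hest1 x true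
  have b6 : groupAvg P πH false ≤ groupAvg P πHhat false + ε :=
    avg_le_eps P hP hPsum _ _ _ _ fun x => hest2 x false
  have hhat_eq : unfairness P πHhat = groupAvg P πHhat true - groupAvg P πHhat false :=
    abs_of_nonneg (by linarith)
  have hA1 : groupAvg P πA true - groupAvg P πA false ≤ unfairness P πA := le_abs_self _
  have hA2 : groupAvg P πA false - groupAvg P πA true ≤ unfairness P πA := by
    have := neg_abs_le (groupAvg P πA true - groupAvg P πA false)
    unfold unfairness; linarith
  have hH1 : groupAvg P πH true - groupAvg P πH false ≤ unfairness P πH := le_abs_self _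
  unfold unfairness at h1 hhat_eq hA1 hA2 hH1 ⊢
  rw [abs_le]
  constructor
  · -- f_c - t_c ≤ α(πH) + 4ε, via πA and πHhat
    have key : groupAvg P πHhat true - groupAvg P πHhat false ≤ |groupAvg P πH true - groupAvg P πH false| + 2 * ε := by
      linarith
    linarith [hA2, h1]
  · linarith

end
end

section
/- Let π_B be defined by π_B(x,a) = π_H(x,a) if x ∈ u(0) ∪ ℓ(1) and π_*(x,a) otherwise. If α(π_B) ≤ α(π_H), then π_B is compliance-robustly fair with respect to π_H: for every compliance function c, the combined policy satisfies α(π_C) ≤ α(π_H). -/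
open Classical Finset

noncomputable section

def piB {X : Type*} (πstar πH : X → Bool → ℝ) : X → Bool → ℝ :=
  fun x a => if πstar x false ≤ πH x false ∨ πH x true < πstar x true then πH x a else πstar x a

theorem stmt7
    {X : Type*} [Fintype X] [Nonempty X] (P : X → Bool → ℝ)
    (hP : ∀ x a, 0 < P x a) (hPsum : ∀ a, ∑ x, P x a = 1)
    (πH πstar : X → Bool → ℝ)
    (hπH : ∀ x a, 0 ≤ πH x a ∧ πH x a ≤ 1) (hπstar : ∀ x a, 0 ≤ πstar x a ∧ πstar x a ≤ 1)
    (hord : groupAvg P πH false ≤ groupAvg P πH true)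
    (hB : unfairness P (piB πstar πH) ≤ unfairness P πH) :
    ∀ c : X → Bool → Bool,
      unfairness P (combine (piB πstar πH) πH c) ≤ unfairness P πH := by
  intro c
  set πB := piB πstar πH with hπBdef
  set πC := combine πB πH c with hπCdef
  -- pointwise facts about πB
  have hBf : ∀ x, πH x false ≤ πB x false := by
    intro x
    simp only [hπBdef, piB]
    split
    · exact le_rfl
    · next h =>
      push_neg at h
      exact h.1.le
  have hBt : ∀ x, πB x true ≤ πH x true := by
    intro x
    simp only [hπBdef, piB]
    split
    · exact le_rfl
    · next h =>
      push_neg at h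
      exact h.2
  -- combined policy lies between
  have hCf1 : ∀ x, πH x false ≤ πC x false := by
    intro x; simp only [hπCdef, combine]; split
    · exact hBf x
    · exact le_rfl
  have hCf2 : ∀ x, πC x false ≤ πB x false := by
    intro x; simp only [hπCdef, combine]; split
    · exact le_rfl
    · exact hBf x
  have hCt1 : ∀ x, πB x true ≤ πC x true := by
    intro x; simp only [hπCdef, combine]; split
    · exact le_rfl
    · exact hBt x
  have hCt2 : ∀ x, πC x true ≤ πH x true := by
    intro x; simp only [hπCdef, combine]; split
    · exact hBt x
    · exact le_rfl
  have mono : ∀ (π₁ π₂ : X → Bool → ℝ) (a : Bool), (∀ x, π₁ x a ≤ π₂ x a) →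
      groupAvg P π₁ a ≤ groupAvg P π₂ a := by
    intro π₁ π₂ a h
    apply Finset.sum_le_sum
    intro x _
    exact mul_le_mul_of_nonneg_right (h x) (hP x a).le
  have h1 : groupAvg P πH false ≤ groupAvg P πC false := mono _ _ _ hCf1
  have h2 : groupAvg P πC false ≤ groupAvg P πB false := mono _ _ _ hCf2
  have h3 : groupAvg P πB true ≤ groupAvg P πC true := mono _ _ _ hCt1
  have h4 : groupAvg P πC true ≤ groupAvg P πH true := mono _ _ _ hCt2
  have hDH : unfairness P πH = groupAvg P πH true - groupAvg P πH false :=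
    abs_of_nonneg (by linarith)
  have hBabs : |groupAvg P πB true - groupAvg P πB false| ≤ unfairness P πH := hB
  rw [abs_le] at hBabs
  rw [hDH] at hBabs
  unfold unfairness
  rw [abs_le, abs_of_nonneg (by linarith : (0:ℝ) ≤ groupAvg P πH true - groupAvg P πH false)]
  constructor <;> linarith [hBabs.1, hBabs.2]

end
end

section
/- Assume α(π_H) ≠ 0 and either π_H(x,1) ≠ π_*(x,1) for some x with π_H(x,1) ≥ π_*(x,1), or π_H(x,0) ≠ π_*(x,0) for some x with π_H(x,0) < π_*(x,0). Then there exists a compliance-robustly fair policy π (satisfying α(π) ≤ α(π_H), π_H(x,0) ≤ π(x,0), π(x,1) ≤ π_H(x,1) for all x) with strictly lower deviation from π_* than π_H, and hence L(π) < L(π_H). -/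
open Classical Finset

noncomputable section

lemma sum_if_eq' {X : Type*} [Fintype X] (x0 : X) (t : ℝ) (h f : X → ℝ) :
    ∑ x, (if x = x0 then t else h x) * f x = ∑ x, h x * f x + (t - h x0) * f x0 := by
  have key : ∑ x, ((if x = x0 then t else h x) * f x - h x * f x) = (t - h x0) * f x0 := by
    rw [Finset.sum_eq_single x0]
    · simp [sub_mul]
    · intro b _ hb; simp [hb]
    · simp
  rw [Finset.sum_sub_distrib] at key
  linarith

def higherDev {X : Type*} (πstar π π' : X → Bool → ℝ) : Prop :=
  ∀ x a, (πstar x a ≤ π x a → π x a ≤ π' x a) ∧ (π x a ≤ πstar x a → π' x a ≤ π x a)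

def strictHigherDev {X : Type*} (πstar π π' : X → Bool → ℝ) : Prop :=
  higherDev πstar π π' ∧ ∃ x a, π x a ≠ π' x a

theorem stmt9
    {X : Type*} [Fintype X] [Nonempty X] (P : X → Bool → ℝ)
    (hP : ∀ x a, 0 < P x a) (hPsum : ∀ a, ∑ x, P x a = 1)
    (πH πstar : X → Bool → ℝ) (L : (X → Bool → ℝ) → ℝ)
    (hπH : ∀ x a, 0 ≤ πH x a ∧ πH x a ≤ 1) (hπstar : ∀ x a, 0 ≤ πstar x a ∧ πstar x a ≤ 1)
    (hord : groupAvg P πH false ≤ groupAvg P πH true)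
    (hmono : ∀ π π' : X → Bool → ℝ, higherDev πstar π π' → L π ≤ L π')
    (hstrict : ∀ π π' : X → Bool → ℝ, strictHigherDev πstar π π' → L π < L π')
    (hmin : ∀ π : X → Bool → ℝ, L πstar ≤ L π)
    (hα : unfairness P πH ≠ 0)
    (hexist : (∃ x, πstar x true ≤ πH x true ∧ πH x true ≠ πstar x true) ∨
              (∃ x, πH x false < πstar x false)) :
    ∃ π : X → Bool → ℝ, (∀ x a, 0 ≤ π x a ∧ π x a ≤ 1) ∧
      unfairness P π ≤ unfairness P πH ∧
      (∀ x, πH x false ≤ π x false) ∧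
      (∀ x, π x true ≤ πH x true) ∧
      strictHigherDev πstar π πH ∧
      L π < L πH := by
  set g := groupAvg P πH true - groupAvg P πH false with hg
  have hgap0 : 0 ≤ g := by simp [hg]; linarith
  have hgap : 0 < g := by
    rcases lt_or_eq_of_le hgap0 with h | h
    · exact h
    · exact absurd (by rw [unfairness, ← hg, ← h, abs_zero]) hα
  have hune : unfairness P πH = g := by rw [unfairness, ← hg, abs_of_nonneg hgap0]
  rcases hexist with ⟨x0, hle, hne⟩ | ⟨x0, hlt⟩
  · have hlt : πstar x0 true < πH x0 true := lt_of_le_of_ne hle (Ne.symm hne)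
    have hP0 := hP x0 true
    set t := max ((πstar x0 true + πH x0 true)/2) (πH x0 true - g/(2 * P x0 true)) with ht
    have ht1 : πstar x0 true < t := lt_of_lt_of_le (by linarith) (le_max_left _ _)
    have ht2 : t < πH x0 true := by
      apply max_lt (by linarith)
      have : 0 < g/(2 * P x0 true) := by positivity
      linarith
    have htd : (πH x0 true - t) * P x0 true ≤ g / 2 := by
      have h1 : πH x0 true - g/(2 * P x0 true) ≤ t := le_max_right _ _
      have h2 : πH x0 true - t ≤ g/(2 * P x0 true) := by linarith
      calc (πH x0 true - t) * P x0 true ≤ g/(2 * P x0 true) * P x0 true :=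
            mul_le_mul_of_nonneg_right h2 (le_of_lt hP0)
        _ = g / 2 := by field_simp
    refine ⟨fun x a => if x = x0 ∧ a = true then t else πH x a, ?_, ?_, ?_, ?_, ?_, ?_⟩
    · intro x a
      by_cases h : x = x0 ∧ a = true
      · simp only [h, and_self, if_true]
        exact ⟨le_trans (hπstar x0 true).1 (le_of_lt ht1), le_trans (le_of_lt ht2) (hπH x0 true).2⟩
      · simp only [h, if_false]; exact hπH x a
    · have hF : groupAvg P (fun x a => if x = x0 ∧ a = true then t else πH x a) false
          = groupAvg P πH false := by
        unfold groupAvg; apply Finset.sum_congr rfl; intro x _; simp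
      have hT : groupAvg P (fun x a => if x = x0 ∧ a = true then t else πH x a) true
          = groupAvg P πH true + (t - πH x0 true) * P x0 true := by
        unfold groupAvg
        simpa using sum_if_eq' x0 t (fun x => πH x true) (fun x => P x true)
      rw [unfairness, hF, hT, hune]
      rw [abs_le]
      have hpos : 0 < (πH x0 true - t) * P x0 true := by
        apply mul_pos (by linarith) hP0
      constructor <;> [skip; skip] <;> simp [hg] at * <;> linarith
    · intro x; simp
    · intro x
      by_cases h : x = x0
      · simp [h]; linarith
      · simp [h]
    · constructor
      · intro x a
        by_cases h : x = x0 ∧ a = true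
        · obtain ⟨hx, ha⟩ := h
          subst hx; subst ha
          simp only [and_self, if_true]
          exact ⟨fun _ => le_of_lt ht2, fun hc => absurd hc (not_le.mpr ht1)⟩
        · simp only [h, if_false]; exact ⟨fun _ => le_refl _, fun _ => le_refl _⟩
      · exact ⟨x0, true, by simp; linarith⟩
    · apply hstrict
      constructor
      · intro x a
        by_cases h : x = x0 ∧ a = true
        · obtain ⟨hx, ha⟩ := h
          subst hx; subst ha
          simp only [and_self, if_true]
          exact ⟨fun _ => le_of_lt ht2, fun hc => absurd hc (not_le.mpr ht1)⟩
        · simp only [h, if_false]; exact ⟨fun _ => le_refl _, fun _ => le_refl _⟩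
      · exact ⟨x0, true, by simp; linarith⟩
  · have hP0 := hP x0 false
    set t := min ((πstar x0 false + πH x0 false)/2) (πH x0 false + g/(2 * P x0 false)) with ht
    have ht1 : t < πstar x0 false := lt_of_le_of_lt (min_le_left _ _) (by linarith)
    have ht2 : πH x0 false < t := by
      apply lt_min (by linarith)
      have : 0 < g/(2 * P x0 false) := by positivity
      linarith
    have htd : (t - πH x0 false) * P x0 false ≤ g / 2 := by
      have h1 : t ≤ πH x0 false + g/(2 * P x0 false) := min_le_right _ _
      have h2 : t - πH x0 false ≤ g/(2 * P x0 false) := by linarith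
      calc (t - πH x0 false) * P x0 false ≤ g/(2 * P x0 false) * P x0 false :=
            mul_le_mul_of_nonneg_right h2 (le_of_lt hP0)
        _ = g / 2 := by field_simp
    refine ⟨fun x a => if x = x0 ∧ a = false then t else πH x a, ?_, ?_, ?_, ?_, ?_, ?_⟩
    · intro x a
      by_cases h : x = x0 ∧ a = false
      · simp only [h, and_self, if_true]
        exact ⟨le_trans (hπH x0 false).1 (le_of_lt ht2), le_trans (le_of_lt ht1) (hπstar x0 false).2⟩
      · simp only [h, if_false]; exact hπH x a
    · have hT : groupAvg P (fun x a => if x = x0 ∧ a = false then t else πH x a) true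
          = groupAvg P πH true := by
        unfold groupAvg; apply Finset.sum_congr rfl; intro x _; simp
      have hF : groupAvg P (fun x a => if x = x0 ∧ a = false then t else πH x a) false
          = groupAvg P πH false + (t - πH x0 false) * P x0 false := by
        unfold groupAvg
        simpa using sum_if_eq' x0 t (fun x => πH x false) (fun x => P x false)
      rw [unfairness, hF, hT, hune]
      rw [abs_le]
      have hpos : 0 < (t - πH x0 false) * P x0 false := by
        apply mul_pos (by linarith) hP0
      constructor <;> [skip; skip] <;> simp [hg] at * <;> linarith
    · intro x
      by_cases h : x = x0
      · simp [h]; linarith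
      · simp [h]
    · intro x; simp
    · constructor
      · intro x a
        by_cases h : x = x0 ∧ a = false
        · obtain ⟨hx, ha⟩ := h
          subst hx; subst ha
          simp only [and_self, if_true]
          exact ⟨fun hc => absurd hc (not_le.mpr ht1), fun _ => le_of_lt ht2⟩
        · simp only [h, if_false]; exact ⟨fun _ => le_refl _, fun _ => le_refl _⟩
      · exact ⟨x0, false, by simp; linarith⟩
    · apply hstrict
      constructor
      · intro x a
        by_cases h : x = x0 ∧ a = false
        · obtain ⟨hx, ha⟩ := h
          subst hx; subst ha
          simp only [and_self, if_true]
          exact ⟨fun hc => absurd hc (not_le.mpr ht1), fun _ => le_of_lt ht2⟩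
        · simp only [h, if_false]; exact ⟨fun _ => le_refl _, fun _ => le_refl _⟩
      · exact ⟨x0, false, by simp; linarith⟩

end
end

section
/- Assume α(π_H) ≠ 0, α(π_B) > α(π_H), π_B(x,1) ≤ π_H(x,1) and π_B(x,0) ≥ π_H(x,0) pointwise, and π̄_H(1) ≥ π̄_H(0). Then for the family π_{A,λ}(x,a) = π_H(x,a) on u(0) ∪ ℓ(1) and (1−λ)π_B(x,a) + λπ_H(x,a) elsewhere, the function g(λ) = π̄_{A,λ}(1) − π̄_{A,λ}(0) is continuous with g(0) ≤ 0 and g(1) = α(π_H) > 0, so there exists λ* ∈ [0,1) with g(λ*) = 0; the resulting policy π_{A,λ*} is compliance-robustly fair and satisfies α(π_{A,λ*}) = 0. -/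
open Classical Finset

noncomputable section

def piAfam {X : Type*} (πstar πH : X → Bool → ℝ) (lam : ℝ) : X → Bool → ℝ :=
  fun x a => if πstar x false ≤ πH x false ∨ πH x true < πstar x true then πH x a
             else (1 - lam) * piB πstar πH x a + lam * πH x a

def gfun {X : Type*} [Fintype X] (P πstar πH : X → Bool → ℝ) (lam : ℝ) : ℝ :=
  groupAvg P (piAfam πstar πH lam) true - groupAvg P (piAfam πstar πH lam) false

lemma piAfam_one {X : Type*} (πstar πH : X → Bool → ℝ) : piAfam πstar πH 1 = πH := by
  funext x a
  unfold piAfam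
  split_ifs <;> ring

lemma piAfam_zero {X : Type*} (πstar πH : X → Bool → ℝ) :
    piAfam πstar πH 0 = piB πstar πH := by
  funext x a
  unfold piAfam piB
  split_ifs <;> ring

lemma gfun_cont {X : Type*} [Fintype X] (P πstar πH : X → Bool → ℝ) :
    Continuous (gfun P πstar πH) := by
  unfold gfun groupAvg
  apply Continuous.sub <;>
  · apply continuous_finset_sum
    intro x _
    apply Continuous.mul _ continuous_const
    unfold piAfam
    by_cases h : πstar x false ≤ πH x false ∨ πH x true < πstar x true
    · simp only [h, if_true]; exact continuous_const
    · simp only [h, if_false]; fun_prop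

theorem stmt10
    {X : Type*} [Fintype X] [Nonempty X] (P : X → Bool → ℝ)
    (hP : ∀ x a, 0 < P x a) (hPsum : ∀ a, ∑ x, P x a = 1)
    (πH πstar : X → Bool → ℝ)
    (hπH : ∀ x a, 0 ≤ πH x a ∧ πH x a ≤ 1) (hπstar : ∀ x a, 0 ≤ πstar x a ∧ πstar x a ≤ 1)
    (hord : groupAvg P πH false ≤ groupAvg P πH true)
    (hα : unfairness P πH ≠ 0)
    (hαB : unfairness P πH < unfairness P (piB πstar πH))
    (hB1 : ∀ x, piB πstar πH x true ≤ πH x true)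
    (hB0 : ∀ x, πH x false ≤ piB πstar πH x false) :
    Continuous (gfun P πstar πH) ∧
    gfun P πstar πH 0 ≤ 0 ∧
    gfun P πstar πH 1 = unfairness P πH ∧
    0 < gfun P πstar πH 1 ∧
    ∃ lam ∈ Set.Ico (0:ℝ) 1, gfun P πstar πH lam = 0 ∧
      unfairness P (piAfam πstar πH lam) = 0 ∧
      unfairness P (piAfam πstar πH lam) ≤ unfairness P πH ∧
      (∀ x, πH x false ≤ piAfam πstar πH lam x false) ∧
      (∀ x, piAfam πstar πH lam x true ≤ πH x true) := by
  have hcont := gfun_cont P πstar πH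
  have hsub : 0 ≤ groupAvg P πH true - groupAvg P πH false := by linarith
  have huH : unfairness P πH = groupAvg P πH true - groupAvg P πH false := by
    unfold unfairness; exact abs_of_nonneg hsub
  have hg1 : gfun P πstar πH 1 = unfairness P πH := by
    unfold gfun; rw [piAfam_one, huH]
  have hαpos : 0 < unfairness P πH := lt_of_le_of_ne (abs_nonneg _) (Ne.symm hα)
  have hg1pos : 0 < gfun P πstar πH 1 := by rw [hg1]; exact hαpos
  -- bounds on group averages of piB
  have hBtrue : groupAvg P (piB πstar πH) true ≤ groupAvg P πH true := by
    unfold groupAvg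
    apply Finset.sum_le_sum
    intro x _
    exact mul_le_mul_of_nonneg_right (hB1 x) (hP x true).le
  have hBfalse : groupAvg P πH false ≤ groupAvg P (piB πstar πH) false := by
    unfold groupAvg
    apply Finset.sum_le_sum
    intro x _
    exact mul_le_mul_of_nonneg_right (hB0 x) (hP x false).le
  have hg0eq : gfun P πstar πH 0 =
      groupAvg P (piB πstar πH) true - groupAvg P (piB πstar πH) false := by
    unfold gfun; rw [piAfam_zero]
  have hg0 : gfun P πstar πH 0 ≤ 0 := by
    by_contra h
    push_neg at h
    have habs : unfairness P (piB πstar πH) = gfun P πstar πH 0 := by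
      unfold unfairness; rw [← hg0eq]; exact abs_of_nonneg h.le
    rw [habs, hg0eq, huH] at hαB
    linarith
  -- IVT
  have hiv := intermediate_value_Icc (by norm_num : (0:ℝ) ≤ 1) hcont.continuousOn
  have h0mem : (0:ℝ) ∈ Set.Icc (gfun P πstar πH 0) (gfun P πstar πH 1) :=
    ⟨hg0, hg1pos.le⟩
  obtain ⟨lam, hlam, hglam⟩ := hiv h0mem
  have hlamne : lam ≠ 1 := by
    intro h; rw [h] at hglam; linarith
  refine ⟨hcont, hg0, hg1, hg1pos, lam, ⟨hlam.1, lt_of_le_of_ne hlam.2 hlamne⟩, hglam, ?_, ?_, ?_, ?_⟩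
  · unfold unfairness
    have : groupAvg P (piAfam πstar πH lam) true - groupAvg P (piAfam πstar πH lam) false = 0 := hglam
    rw [this, abs_zero]
  · unfold unfairness
    have : groupAvg P (piAfam πstar πH lam) true - groupAvg P (piAfam πstar πH lam) false = 0 := hglam
    rw [this, abs_zero]; exact abs_nonneg _
  · intro x
    unfold piAfam
    split_ifs with h
    · exact le_refl _
    · have := hB0 x
      nlinarith [hlam.1, hlam.2]
  · intro x
    unfold piAfam
    split_ifs with h
    · exact le_refl _
    · have := hB1 x
      nlinarith [hlam.1, hlam.2]

end
end

section
/- There exists a setting (X a singleton, a joint distribution P over A × Y, squared loss L, and a human policy π_H with α(π_H) ≠ 0 and π_H ≠ π_*) such that no policy π simultaneously satisfies: (i) π is compliance-robustly fair with respect to π_H, (ii) α(π) = 0, and (iii) L(π) ≤ L(π_H). Concretely, with P(a=1,y=1) = P(a=0,y=0) = (1−ε)/2, P(a=1,y=0) = P(a=0,y=1) = ε/2 for ε ∈ (0, 1/7], squared loss, π_*(1) = 1−ε, π_*(0) = ε, and π_H(1) = 1−ε, π_H(0) = ε/2, any policy π with π(0) = π(1) has L(π) ≥ 1/4 > L(π_H).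 -/
noncomputable section

def Lsq (ε : ℝ) (π : Bool → ℝ) : ℝ :=
  (1/2) * ((1 - ε) * (π true - 1)^2 + ε * (π true)^2
    + ε * (π false - 1)^2 + (1 - ε) * (π false)^2)

def piHex (ε : ℝ) : Bool → ℝ := fun a => if a then 1 - ε else ε / 2

def piStarEx (ε : ℝ) : Bool → ℝ := fun a => if a then 1 - ε else ε

theorem stmt12 (ε : ℝ) (hε0 : 0 < ε) (hε : ε ≤ 1/7) :
    |piHex ε true - piHex ε false| ≠ 0 ∧
    piHex ε ≠ piStarEx ε ∧
    ∀ π : Bool → ℝ, (∀ a, 0 ≤ π a ∧ π a ≤ 1) →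
      ¬((|π true - π false| ≤ |piHex ε true - piHex ε false| ∧
          piHex ε false ≤ π false ∧ π true ≤ piHex ε true) ∧
        |π true - π false| = 0 ∧
        Lsq ε π ≤ Lsq ε (piHex ε)) := by
  refine ⟨?_, ?_, ?_⟩
  · simp only [piHex, show (true = true) = True from by simp, show (false = true) = False from by simp, if_true, if_false]
    rw [abs_ne_zero]
    intro h
    nlinarith
  · intro h
    have := congrFun h false
    simp only [piHex, piStarEx, show (false = true) = False from by simp, if_false] at this
    nlinarith
  · rintro π hπ ⟨⟨-, -, -⟩, heq, hL⟩
    have ht : π true = π false := by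
      have := abs_eq_zero.mp heq; linarith
    simp only [Lsq, piHex, show (true = true) = True from by simp, show (false = true) = False from by simp, if_true, if_false] at hL
    rw [ht] at hL
    nlinarith [sq_nonneg (π false - 1/2), sq_nonneg ε, hε0.le]

end
end

section
/- Suppose a fairness criterion φ : Π → ℝ≥0 admits policies π_low, π_high and a compliance function c₀ such that φ(π_low) < φ(π_high), and both combined policies (π_low where c₀ = 1, π_high otherwise) and (π_high where c₀ = 1, π_low otherwise) have φ-value strictly less than φ(π_high). Then there exist policies π_H and π_A with φ(π_A) ≤ φ(π_H) such that π_A is not compliance-robustly fair with respect to π_H under φ: some compliance function c yields a combined policy π_C with φ(π_C) > φ(π_H). -/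
noncomputable section

theorem stmt15
    {X : Type*} (φ : (X → Bool → ℝ) → ℝ)
    (hφ : ∀ π : X → Bool → ℝ, 0 ≤ φ π)
    (πlow πhigh : X → Bool → ℝ) (c₀ : X → Bool → Bool)
    (hlow : ∀ x a, 0 ≤ πlow x a ∧ πlow x a ≤ 1)
    (hhigh : ∀ x a, 0 ≤ πhigh x a ∧ πhigh x a ≤ 1)
    (hlh : φ πlow < φ πhigh)
    (h2 : φ (combine πlow πhigh c₀) < φ πhigh)
    (h3 : φ (combine πhigh πlow c₀) < φ πhigh) :
    ∃ πH πA : X → Bool → ℝ,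
      (∀ x a, 0 ≤ πH x a ∧ πH x a ≤ 1) ∧
      (∀ x a, 0 ≤ πA x a ∧ πA x a ≤ 1) ∧
      φ πA ≤ φ πH ∧
      ∃ c : X → Bool → Bool, φ πH < φ (combine πA πH c) := by
  set p1 := combine πlow πhigh c₀ with hp1
  set p2 := combine πhigh πlow c₀ with hp2
  have hb1 : ∀ x a, 0 ≤ p1 x a ∧ p1 x a ≤ 1 := by
    intro x a; simp only [hp1, combine]; split
    · exact hlow x a
    · exact hhigh x a
  have hb2 : ∀ x a, 0 ≤ p2 x a ∧ p2 x a ≤ 1 := by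
    intro x a; simp only [hp2, combine]; split
    · exact hhigh x a
    · exact hlow x a
  have key1 : combine p2 p1 c₀ = πhigh := by
    funext x a
    simp only [combine]
    by_cases h : c₀ x a <;> simp [hp1, hp2, combine, h]
  have key2 : combine p1 p2 (fun x a => !(c₀ x a)) = πhigh := by
    funext x a
    simp only [combine]
    by_cases h : c₀ x a <;> simp [hp1, hp2, combine, h]
  by_cases hcmp : φ p2 ≤ φ p1
  · exact ⟨p1, p2, hb1, hb2, hcmp, c₀, by rw [key1]; exact h2⟩
  · exact ⟨p2, p1, hb2, hb1, le_of_not_ge hcmp, fun x a => !(c₀ x a),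
      by rw [key2]; exact h3⟩

end
end
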